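/- Convex lower-level reformulation: Suppose for each x ∈ X, each g_j(x,·) is convex and each h_i(x,·) is concave on ℝ^p, and the minimum of g_j(x,·) over U(x) = {u : h(x,u) ≥ 0} is attained at a KKT point for every x ∈ X. Then x ∈ X is feasible for the GSIP (g(x,u) ≥ 0 for all u ∈ U(x)) if and only if for each j there exist z_j ∈ ℝ^p and λ_j ∈ ℝ^m satisfying ∇_u h(x, z_j) λ_j = ∇_u g_j(x, z_j), 0 ≤ h(x, z_j) ⊥ λ_j ≥ 0, and g_j(x, z_j) ≥ 0. -/

import Mathlib

/-!
A convex differentiable function lies above its tangent planes and a concave one below them.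
Hence at a KKT point `(z, λ)` of `min {f u : c u ≥ 0}`, for every feasible `u`,
`f u - f z ≥ ⟪∇f z, u - z⟫ = ∑ λᵢ ⟪∇cᵢ z, u - z⟫ ≥ ∑ λᵢ (cᵢ u - cᵢ z) = ∑ λᵢ cᵢ u ≥ 0`,
the equalities by stationarity and complementary slackness. So a KKT point with `g_j(x, z_j) ≥ 0`
certifies `g_j(x, ·) ≥ 0` on `U(x)`; conversely the attained KKT minimizer is such a
certificate.
-/

open Set

section TangentInequalities

variable {E : Type*} [NormedAddCommGroup E] [NormedSpace ℝ E] {s : Set E} {f : E → ℝ}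
  {f' : E →L[ℝ] ℝ} {z u : E}

theorem ConvexOn.add_fderiv_sub_le (hf : ConvexOn ℝ s f) (hz : z ∈ s) (hu : u ∈ s)
    (hf' : HasFDerivAt f f' z) : f z + f' (u - z) ≤ f u := by
  set ℓ : ℝ →ᵃ[ℝ] E := AffineMap.lineMap z u
  have hℓ0 : ℓ 0 = z := AffineMap.lineMap_apply_zero z u
  have hℓ1 : ℓ 1 = u := AffineMap.lineMap_apply_one z u
  have hline : ConvexOn ℝ (ℓ ⁻¹' s) (f ∘ ℓ) := hf.comp_affineMap ℓ
  have hderiv : HasDerivAt (f ∘ ℓ) (f' (u - z)) 0 := by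
    refine HasFDerivAt.comp_hasDerivAt (0 : ℝ) ?_ AffineMap.hasDerivAt_lineMap
    rwa [hℓ0]
  have hslope := hline.le_slope_of_hasDerivAt (by simpa [hℓ0]) (by simpa [hℓ1])
    zero_lt_one hderiv
  simp only [slope_def_field, Function.comp_apply, sub_zero, div_one] at hslope
  rw [hℓ0, hℓ1] at hslope
  linarith

theorem ConcaveOn.le_add_fderiv_sub (hf : ConcaveOn ℝ s f) (hz : z ∈ s) (hu : u ∈ s)
    (hf' : HasFDerivAt f f' z) : f u ≤ f z + f' (u - z) := by
  have := hf.neg.add_fderiv_sub_le hz hu hf'.neg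
  simp only [Pi.neg_apply, neg_apply] at this
  linarith

end TangentInequalities

theorem ConvexOn.le_of_kkt {ι E : Type*} [Fintype ι] [NormedAddCommGroup E]
    [InnerProductSpace ℝ E] [CompleteSpace E] {s : Set E} {f : E → ℝ} {c : ι → E → ℝ}
    {lam : ι → ℝ} {z u : E} (hf : ConvexOn ℝ s f) (hc : ∀ i, ConcaveOn ℝ s (c i))
    (hfd : DifferentiableAt ℝ f z) (hcd : ∀ i, DifferentiableAt ℝ (c i) z) (hz : z ∈ s)
    (hus : u ∈ s) (hstat : gradient f z = ∑ i, lam i • gradient (c i) z)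
    (hlam : ∀ i, 0 ≤ lam i) (hslack : ∀ i, lam i * c i z = 0) (hu : ∀ i, 0 ≤ c i u) :
    f z ≤ f u := by
  have htangent_f : f z + inner ℝ (gradient f z) (u - z) ≤ f u := by
    simpa using hf.add_fderiv_sub_le hz hus hfd.hasGradientAt.hasFDerivAt
  have htangent_c : ∀ i, c i u - c i z ≤ inner ℝ (gradient (c i) z) (u - z) := fun i => by
    have := (hc i).le_add_fderiv_sub hz hus (hcd i).hasGradientAt.hasFDerivAt
    simp only [InnerProductSpace.toDual_apply_apply] at this
    linarith
  have hinner :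
      inner ℝ (gradient f z) (u - z) = ∑ i, lam i * inner ℝ (gradient (c i) z) (u - z) := by
    simp only [hstat, sum_inner, real_inner_smul_left]
  have hnonneg : 0 ≤ ∑ i, lam i * inner ℝ (gradient (c i) z) (u - z) :=
    calc 0 ≤ ∑ i, lam i * c i u := Finset.sum_nonneg fun i _ => mul_nonneg (hlam i) (hu i)
      _ = ∑ i, lam i * (c i u - c i z) := by simp only [mul_sub, hslack, sub_zero]
      _ ≤ _ := Finset.sum_le_sum fun i _ => mul_le_mul_of_nonneg_left (htangent_c i) (hlam i)
  linarith

/-- Convex lower-level reformulation: if each `g_j(x,·)` is convex, each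
`h_i(x,·)` is concave, and the lower-level minimum is attained at a KKT
point for every `x ∈ X`, then `x ∈ X` is GSIP feasible iff for each `j`
there exist `z_j, λ_j` satisfying the KKT conditions with `g_j(x,z_j) ≥ 0`. -/
theorem convex_lower_level_reformulation {n p m s : ℕ}
    (X : Set (Fin n → ℝ))
    (g : Fin s → (Fin n → ℝ) → EuclideanSpace ℝ (Fin p) → ℝ)
    (h : Fin m → (Fin n → ℝ) → EuclideanSpace ℝ (Fin p) → ℝ)
    (hgconv : ∀ j, ∀ x ∈ X, ConvexOn ℝ Set.univ (g j x))
    (hgdiff : ∀ j, ∀ x ∈ X, Differentiable ℝ (g j x))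
    (hhconc : ∀ i, ∀ x ∈ X, ConcaveOn ℝ Set.univ (h i x))
    (hhdiff : ∀ i, ∀ x ∈ X, Differentiable ℝ (h i x))
    (hKKT : ∀ x ∈ X, ∀ j, ∃ (z : EuclideanSpace ℝ (Fin p)) (lam : Fin m → ℝ),
        gradient (g j x) z = ∑ i, lam i • gradient (h i x) z ∧
        (∀ i, 0 ≤ lam i) ∧ (∀ i, 0 ≤ h i x z) ∧ (∀ i, lam i * h i x z = 0) ∧
        ∀ u, (∀ i, 0 ≤ h i x u) → g j x z ≤ g j x u) :
    ∀ x ∈ X,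
      ((∀ u, (∀ i, 0 ≤ h i x u) → ∀ j, 0 ≤ g j x u) ↔
        ∀ j, ∃ (z : EuclideanSpace ℝ (Fin p)) (lam : Fin m → ℝ),
          gradient (g j x) z = ∑ i, lam i • gradient (h i x) z ∧
          (∀ i, 0 ≤ lam i) ∧ (∀ i, 0 ≤ h i x z) ∧
          (∀ i, lam i * h i x z = 0) ∧ 0 ≤ g j x z) := by
  intro x hx
  constructor
  · intro hfeas j
    obtain ⟨z, lam, hstat, hlam, hz, hslack, -⟩ := hKKT x hx j
    exact ⟨z, lam, hstat, hlam, hz, hslack, hfeas z hz j⟩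
  · rintro hcert u hu j
    obtain ⟨z, lam, hstat, hlam, -, hslack, hgz⟩ := hcert j
    exact hgz.trans <| (hgconv j x hx).le_of_kkt (fun i => hhconc i x hx)
      (hgdiff j x hx z) (fun i => hhdiff i x hx z) (mem_univ z) (mem_univ u) hstat hlam hslack hu
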